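/- Let g be a finite-dimensional nilpotent Lie algebra over ℂ and d : g* → Λ²g* the Chevalley–Eilenberg differential. Then every closed 2-cochain in Λ²(Ann[g,g]) lies in the image of d if and only if the induced bracket map b' : Λ²(g/C₁g) → C₁g/C₂g is injective; since b' is always surjective, this holds iff b' is an isomorphism, i.e. iff g/C₂g is a free 2-step nilpotent Lie algebra. -/

import Mathlib

/-!
Write `V = g ⧸ C₁g`. A functional `P` on `Λ²V` pulls back to the 2-form `(x, y) ↦ P (x̄ ∧ ȳ)` on
`g`, and for `P = α ∧ β` with `α, β ∈ V*` this is a generator of `Λ²(Ann[g,g])`. If such a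
pullback is `x, y ↦ γ⁅x, y⁆`, then `γ` kills `⁅C₁g, g⁆ = C₂g` (because `C₁g` dies in `V`), so `P`
factors through `b'` via the functional induced by `γ` on `C₁g/C₂g`. Hence if all these
pullbacks are exact, the decomposable functionals, which separate the points of `Λ²V`, vanish on
`ker b'` and `b'` is injective. Conversely, if `b'` is injective every functional on `Λ²V`
factors through `b'`, and the resulting functional on `C₁g/C₂g` extends to the required `γ`.
Surjectivity holds since `C₁g` is spanned by brackets.
-/

/-- The Lie bracket of `g`, bundled as a bilinear map. -/
noncomputable def bracketBilin (g : Type*) [LieRing g] [LieAlgebra ℂ g] :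
    g →ₗ[ℂ] g →ₗ[ℂ] g :=
  LinearMap.mk₂ ℂ (fun x y => ⁅x, y⁆) add_lie smul_lie lie_add lie_smul

/-- The Chevalley–Eilenberg differential `d : g* → Λ²g*`, `(dα)(x,y) = -α⁅x,y⁆`,
with `Λ²g*` realised as bilinear forms on `g`. -/
noncomputable def dCE (g : Type*) [LieRing g] [LieAlgebra ℂ g] (α : Module.Dual ℂ g) :
    g →ₗ[ℂ] g →ₗ[ℂ] ℂ :=
  -((bracketBilin g).compr₂ α)

/-- The wedge `α ∧ β` of two linear functionals, as a bilinear form. -/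
noncomputable def wedgeDual (g : Type*) [LieRing g] [LieAlgebra ℂ g]
    (α β : Module.Dual ℂ g) : g →ₗ[ℂ] g →ₗ[ℂ] ℂ :=
  α.smulRight β - β.smulRight α

/-- The wedge of two elements of a module, as an element of the second exterior power. -/
noncomputable def wedge2 {M : Type*} [AddCommGroup M] [Module ℂ M] (x y : M) :
    ⋀[ℂ]^2 M :=
  ⟨ExteriorAlgebra.ιMulti ℂ 2 ![x, y],
    ExteriorAlgebra.ιMulti_range ℂ 2 (Set.mem_range_self _)⟩

/-- The `k`-th term of the lower central series, as a submodule. -/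
noncomputable def lcsSub (g : Type*) [LieRing g] [LieAlgebra ℂ g] (k : ℕ) : Submodule ℂ g :=
  LieSubmodule.toSubmodule (LieModule.lowerCentralSeries ℂ g g k)

open exteriorPower

theorem exteriorPower.eq_zero_of_forall_pairingDual_ιMulti {R M : Type*} [CommRing R]
    [AddCommGroup M] [Module R M] [Module.Free R M] {n : ℕ} {ω : ⋀[R]^n M}
    (h : ∀ f : Fin n → Module.Dual R M, pairingDual R M n (ιMulti R n f) ω = 0) : ω = 0 := by
  let b := Module.Free.chooseBasis R M
  let _ : LinearOrder (Module.Free.ChooseBasisIndex R M) :=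
    IsWellOrder.linearOrder WellOrderingRel
  -- the coordinates for the induced basis of `⋀ⁿM` are pairings with wedges of coordinates of `b`
  refine (b.exteriorPower n).forall_coord_eq_zero_iff.1 fun s => ?_
  rw [basis_coord]
  exact h _

section Wedge2

variable {M : Type*} [AddCommGroup M] [Module ℂ M]

theorem wedge2_eq_ιMulti (x y : M) : wedge2 x y = ιMulti ℂ 2 ![x, y] := rfl

theorem ιMulti_fin_two (v : Fin 2 → M) : ιMulti ℂ 2 v = wedge2 (v 0) (v 1) := by
  rw [wedge2_eq_ιMulti]
  congr
  funext i
  fin_cases i <;> rfl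

theorem wedge2_zero_left (y : M) : wedge2 0 y = 0 :=
  (ιMulti ℂ 2).map_coord_zero 0 rfl

theorem wedge2_linearMap_ext {N : Type*} [AddCommGroup N] [Module ℂ N]
    {F G : ⋀[ℂ]^2 M →ₗ[ℂ] N} (h : ∀ x y, F (wedge2 x y) = G (wedge2 x y)) : F = G := by
  ext v
  simpa [ιMulti_fin_two] using h (v 0) (v 1)

theorem pairingDual_wedge2_wedge2 (α β : Module.Dual ℂ M) (x y : M) :
    pairingDual ℂ M 2 (wedge2 α β) (wedge2 x y) = α x * β y - β x * α y := by
  simp [wedge2_eq_ιMulti, pairingDual_ιMulti_ιMulti, Matrix.det_fin_two]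

end Wedge2

section LowerCentralSeries

variable {g : Type*} [LieRing g] [LieAlgebra ℂ g]

theorem lcsSub_succ_eq_span (k : ℕ) :
    lcsSub g (k + 1) = Submodule.span ℂ {m | ∃ x : g, ∃ z ∈ lcsSub g k, ⁅x, z⁆ = m} := by
  rw [lcsSub, LieModule.lowerCentralSeries_succ, LieSubmodule.lieIdeal_oper_eq_linear_span']
  simp [lcsSub]

theorem lcsSub_succ_le_iff {k : ℕ} {S : Submodule ℂ g} :
    lcsSub g (k + 1) ≤ S ↔ ∀ x : g, ∀ z ∈ lcsSub g k, ⁅x, z⁆ ∈ S := by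
  rw [lcsSub_succ_eq_span, Submodule.span_le]
  exact ⟨fun h x z hz => h ⟨x, z, hz, rfl⟩, fun h _ ⟨x, z, hz, hm⟩ => hm ▸ h x z hz⟩

theorem lie_mem_lcsSub_one (x y : g) : ⁅x, y⁆ ∈ lcsSub g 1 :=
  (lcsSub_succ_eq_span (g := g) 0).ge (Submodule.subset_span ⟨x, y, Submodule.mem_top, rfl⟩)

end LowerCentralSeries

section Cochains

variable {g : Type*} [LieRing g] [LieAlgebra ℂ g]

theorem dCE_apply (α : Module.Dual ℂ g) (x y : g) : dCE g α x y = -α ⁅x, y⁆ := rfl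

theorem wedgeDual_apply (α β : Module.Dual ℂ g) (x y : g) :
    wedgeDual g α β x y = α x * β y - β x * α y := rfl

variable (g) in
def wedgeAnnSpan : Submodule ℂ (g →ₗ[ℂ] g →ₗ[ℂ] ℂ) :=
  Submodule.span ℂ {W | ∃ α β : Module.Dual ℂ g,
    (∀ z ∈ lcsSub g 1, α z = 0) ∧ (∀ z ∈ lcsSub g 1, β z = 0) ∧ W = wedgeDual g α β}

variable (g) in
def dCESpan : Submodule ℂ (g →ₗ[ℂ] g →ₗ[ℂ] ℂ) :=
  Submodule.span ℂ {F | ∃ α : Module.Dual ℂ g, F = dCE g α}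

theorem mem_dCESpan_iff {F : g →ₗ[ℂ] g →ₗ[ℂ] ℂ} : F ∈ dCESpan g ↔ ∃ α, F = dCE g α := by
  let d : Module.Dual ℂ g →ₗ[ℂ] g →ₗ[ℂ] g →ₗ[ℂ] ℂ :=
    -(LinearMap.lcomp ℂ _ (bracketBilin g) ∘ₗ LinearMap.llcomp ℂ g g ℂ)
  have hd : {F | ∃ α : Module.Dual ℂ g, F = dCE g α} = LinearMap.range d :=
    Set.ext fun _ => exists_congr fun _ => eq_comm
  rw [dCESpan, hd, Submodule.span_eq, ← SetLike.mem_coe, ← hd, Set.mem_ofPred_eq]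

end Cochains

section InducedBracket

variable {g : Type*} [LieRing g] [LieAlgebra ℂ g]

def IsInducedBracket
    (b' : (⋀[ℂ]^2 (g ⧸ lcsSub g 1)) →ₗ[ℂ]
      ((lcsSub g 1) ⧸ (Submodule.comap (lcsSub g 1).subtype (lcsSub g 2)))) : Prop :=
  ∀ (x y : g) (hxy : ⁅x, y⁆ ∈ lcsSub g 1),
    b' (wedge2 (Submodule.Quotient.mk x) (Submodule.Quotient.mk y)) =
      Submodule.Quotient.mk ⟨⁅x, y⁆, hxy⟩

variable {b' : (⋀[ℂ]^2 (g ⧸ lcsSub g 1)) →ₗ[ℂ]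
      ((lcsSub g 1) ⧸ (Submodule.comap (lcsSub g 1).subtype (lcsSub g 2)))}

theorem IsInducedBracket.surjective (hb' : IsInducedBracket b') : Function.Surjective b' := by
  let K := Submodule.comap (lcsSub g 1).subtype (lcsSub g 2)
  have hle : lcsSub g 1 ≤ ((LinearMap.range b').comap K.mkQ).map (lcsSub g 1).subtype :=
    lcsSub_succ_le_iff.2 fun x y _ =>
      ⟨⟨⁅x, y⁆, lie_mem_lcsSub_one x y⟩, ⟨_, hb' x y _⟩, rfl⟩
  have htop : (LinearMap.range b').comap K.mkQ = ⊤ := by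
    rwa [← Submodule.comap_map_eq_of_injective (lcsSub g 1).injective_subtype
      ((LinearMap.range b').comap K.mkQ), Submodule.comap_subtype_eq_top]
  intro t
  obtain ⟨z, rfl⟩ := K.mkQ_surjective t
  exact (Submodule.eq_top_iff'.1 htop z : _)

theorem lcsSub_two_le_ker_of_apply_wedge2 (P : Module.Dual ℂ (⋀[ℂ]^2 (g ⧸ lcsSub g 1)))
    (γ : Module.Dual ℂ g)
    (h : ∀ x y : g, P (wedge2 (Submodule.Quotient.mk x) (Submodule.Quotient.mk y)) = γ ⁅x, y⁆) :
    lcsSub g 2 ≤ LinearMap.ker γ := by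
  refine lcsSub_succ_le_iff.2 fun x z hz => ?_
  have hz0 : (Submodule.Quotient.mk z : g ⧸ lcsSub g 1) = 0 :=
    (Submodule.Quotient.mk_eq_zero _).2 hz
  have hγ := h z x
  rw [hz0, wedge2_zero_left, map_zero] at hγ
  rw [LinearMap.mem_ker, ← lie_skew, map_neg, ← hγ, neg_zero]

theorem IsInducedBracket.ker_le_ker_of_apply_wedge2 (hb' : IsInducedBracket b')
    (P : Module.Dual ℂ (⋀[ℂ]^2 (g ⧸ lcsSub g 1))) (γ : Module.Dual ℂ g)
    (h : ∀ x y : g, P (wedge2 (Submodule.Quotient.mk x) (Submodule.Quotient.mk y)) = γ ⁅x, y⁆) :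
    LinearMap.ker b' ≤ LinearMap.ker P := by
  let Q := (Submodule.comap (lcsSub g 1).subtype (lcsSub g 2)).liftQ
    (γ ∘ₗ (lcsSub g 1).subtype) fun _ hz => lcsSub_two_le_ker_of_apply_wedge2 P γ h hz
  have hPQ : P = Q ∘ₗ b' := wedge2_linearMap_ext fun v w => by
    obtain ⟨x, rfl⟩ := Submodule.Quotient.mk_surjective _ v
    obtain ⟨y, rfl⟩ := Submodule.Quotient.mk_surjective _ w
    rw [h, LinearMap.comp_apply, hb' x y (lie_mem_lcsSub_one x y)]
    rfl
  rw [hPQ]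
  exact LinearMap.ker_le_ker_comp b' Q

theorem IsInducedBracket.exists_apply_wedge2 (hb' : IsInducedBracket b')
    (hinj : Function.Injective b') (P : Module.Dual ℂ (⋀[ℂ]^2 (g ⧸ lcsSub g 1))) :
    ∃ γ : Module.Dual ℂ g, ∀ x y : g,
      P (wedge2 (Submodule.Quotient.mk x) (Submodule.Quotient.mk y)) = γ ⁅x, y⁆ := by
  obtain ⟨L, hL⟩ := b'.exists_leftInverse_of_injective (LinearMap.ker_eq_bot.2 hinj)
  obtain ⟨γ, hγ⟩ := LinearMap.exists_extend
    (P ∘ₗ L ∘ₗ (Submodule.comap (lcsSub g 1).subtype (lcsSub g 2)).mkQ)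
  refine ⟨γ, fun x y => ?_⟩
  have hxy := lie_mem_lcsSub_one x y
  rw [← LinearMap.id_apply (R := ℂ) (wedge2 _ _), ← hL, LinearMap.comp_apply, hb' x y hxy]
  exact (LinearMap.congr_fun hγ ⟨_, hxy⟩).symm

theorem IsInducedBracket.injective_of_wedgeSpan_le (hb' : IsInducedBracket b')
    (hspan : wedgeAnnSpan g ≤ dCESpan g) :
    Function.Injective b' := by
  refine LinearMap.ker_eq_bot.1 (LinearMap.ker_eq_bot'.2 fun ω hω => ?_)
  refine eq_zero_of_forall_pairingDual_ιMulti fun f => ?_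
  have hann : ∀ i, ∀ z ∈ lcsSub g 1, (f i ∘ₗ (lcsSub g 1).mkQ) z = 0 := fun i z hz => by
    rw [LinearMap.comp_apply, Submodule.mkQ_apply, (Submodule.Quotient.mk_eq_zero _).2 hz,
      map_zero]
  obtain ⟨γ, hγ⟩ :=
    mem_dCESpan_iff.1 (hspan (Submodule.subset_span ⟨_, _, hann 0, hann 1, rfl⟩))
  refine hb'.ker_le_ker_of_apply_wedge2 _ (-γ) (fun x y => ?_) hω
  rw [ιMulti_fin_two, pairingDual_wedge2_wedge2, LinearMap.neg_apply, ← dCE_apply, ← hγ,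
    wedgeDual_apply]
  rfl

theorem IsInducedBracket.wedgeSpan_le_of_injective (hb' : IsInducedBracket b')
    (hinj : Function.Injective b') :
    wedgeAnnSpan g ≤ dCESpan g := by
  refine Submodule.span_le.2 ?_
  rintro _ ⟨α, β, hα, hβ, rfl⟩
  let α₀ := (lcsSub g 1).liftQ α hα
  let β₀ := (lcsSub g 1).liftQ β hβ
  obtain ⟨γ, hγ⟩ := hb'.exists_apply_wedge2 hinj (pairingDual ℂ _ 2 (wedge2 α₀ β₀))
  refine Submodule.subset_span ⟨-γ, ?_⟩
  ext x y
  rw [wedgeDual_apply, dCE_apply, LinearMap.neg_apply, neg_neg, ← hγ,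
    pairingDual_wedge2_wedge2]
  rfl

end InducedBracket

theorem stmt8_general (g : Type*) [LieRing g] [LieAlgebra ℂ g]
    (b' : (⋀[ℂ]^2 (g ⧸ lcsSub g 1)) →ₗ[ℂ]
      ((lcsSub g 1) ⧸ (Submodule.comap (lcsSub g 1).subtype (lcsSub g 2))))
    (hb' : ∀ (x y : g) (hxy : ⁅x, y⁆ ∈ lcsSub g 1),
      b' (wedge2 (Submodule.Quotient.mk x) (Submodule.Quotient.mk y)) =
        Submodule.Quotient.mk ⟨⁅x, y⁆, hxy⟩) :
    (Submodule.span ℂ {W : g →ₗ[ℂ] g →ₗ[ℂ] ℂ | ∃ α β : Module.Dual ℂ g,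
          (∀ z ∈ lcsSub g 1, α z = 0) ∧ (∀ z ∈ lcsSub g 1, β z = 0) ∧
          W = wedgeDual g α β} ≤
        Submodule.span ℂ {F : g →ₗ[ℂ] g →ₗ[ℂ] ℂ | ∃ α : Module.Dual ℂ g, F = dCE g α} ↔
      Function.Injective b') ∧
    Function.Surjective b' ∧
    (Submodule.span ℂ {W : g →ₗ[ℂ] g →ₗ[ℂ] ℂ | ∃ α β : Module.Dual ℂ g,
          (∀ z ∈ lcsSub g 1, α z = 0) ∧ (∀ z ∈ lcsSub g 1, β z = 0) ∧
          W = wedgeDual g α β} ≤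
        Submodule.span ℂ {F : g →ₗ[ℂ] g →ₗ[ℂ] ℂ | ∃ α : Module.Dual ℂ g, F = dCE g α} ↔
      Function.Bijective b') := by
  have hb : IsInducedBracket b' := hb'
  have hiff := Iff.intro hb.injective_of_wedgeSpan_le hb.wedgeSpan_le_of_injective
  exact ⟨hiff, hb.surjective, hiff.trans (and_iff_left hb.surjective).symm⟩

/-- For a finite-dimensional nilpotent complex Lie algebra `g` and the map
`b' : Λ²(g/C₁g) → C₁g/C₂g` induced by the Lie bracket: every 2-cochain in `Λ²(Ann[g,g])`
lies in the image of the Chevalley–Eilenberg differential `d` iff `b'` is injective;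
moreover `b'` is always surjective, so this holds iff `b'` is bijective, i.e. iff
`g/C₂g` is a free 2-step nilpotent Lie algebra. -/
theorem stmt8 (g : Type*) [LieRing g] [LieAlgebra ℂ g] [FiniteDimensional ℂ g]
    [LieRing.IsNilpotent g]
    (b' : (⋀[ℂ]^2 (g ⧸ lcsSub g 1)) →ₗ[ℂ]
      ((lcsSub g 1) ⧸ (Submodule.comap (lcsSub g 1).subtype (lcsSub g 2))))
    (hb' : ∀ (x y : g) (hxy : ⁅x, y⁆ ∈ lcsSub g 1),
      b' (wedge2 (Submodule.Quotient.mk x) (Submodule.Quotient.mk y)) =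
        Submodule.Quotient.mk ⟨⁅x, y⁆, hxy⟩) :
    (Submodule.span ℂ {W : g →ₗ[ℂ] g →ₗ[ℂ] ℂ | ∃ α β : Module.Dual ℂ g,
          (∀ z ∈ lcsSub g 1, α z = 0) ∧ (∀ z ∈ lcsSub g 1, β z = 0) ∧
          W = wedgeDual g α β} ≤
        Submodule.span ℂ {F : g →ₗ[ℂ] g →ₗ[ℂ] ℂ | ∃ α : Module.Dual ℂ g, F = dCE g α} ↔
      Function.Injective b') ∧
    Function.Surjective b' ∧
    (Submodule.span ℂ {W : g →ₗ[ℂ] g →ₗ[ℂ] ℂ | ∃ α β : Module.Dual ℂ g,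
          (∀ z ∈ lcsSub g 1, α z = 0) ∧ (∀ z ∈ lcsSub g 1, β z = 0) ∧
          W = wedgeDual g α β} ≤
        Submodule.span ℂ {F : g →ₗ[ℂ] g →ₗ[ℂ] ℂ | ∃ α : Module.Dual ℂ g, F = dCE g α} ↔
      Function.Bijective b') :=
  stmt8_general g b' hb'
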